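/- The polynomial map G : ℂ² → ℂ² defined by G(u,v) = (1 + u·v + v², (−2 + u² + 6v² + u·v·(3 + v²))/2) is surjective: for every (p,q) ∈ ℂ² there exist u, v ∈ ℂ with G(u,v) = (p,q). -/
import Mathlib

open Polynomial

/-- The polynomial map `G(u,v) = (1 + uv + v², (−2 + u² + 6v² + uv(3 + v²))/2)`
is surjective from ℂ² onto ℂ². -/
theorem G_surjective :
    Function.Surjective (fun uv : ℂ × ℂ =>
      ((1 + uv.1 * uv.2 + uv.2 ^ 2,
        (-2 + uv.1 ^ 2 + 6 * uv.2 ^ 2 + uv.1 * uv.2 * (3 + uv.2 ^ 2)) / 2) : ℂ × ℂ)) := by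
  rintro ⟨p, q⟩
  by_cases hp : p = 1
  · obtain ⟨u, hu⟩ := IsAlgClosed.exists_pow_nat_eq (2 * q + 2) (n := 2) (by norm_num)
    refine ⟨(u, 0), ?_⟩
    subst hp
    simp only [Prod.mk.injEq]
    constructor
    · ring
    · rw [show (-2 + u ^ 2 + 6 * (0:ℂ) ^ 2 + u * 0 * (3 + 0 ^ 2)) = u ^ 2 - 2 by ring, hu]
      ring
  · set f : Polynomial ℂ := X ^ 6 - C (p + 3) * X ^ 4 + C (2 * q + 3 - p) * X ^ 2
      - C ((p - 1) ^ 2) with hf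
    have hdeg : 0 < f.degree := by
      have h6 : f.degree = 6 := by rw [hf]; compute_degree!
      rw [h6]; norm_num
    obtain ⟨v, hv⟩ := Complex.exists_root hdeg
    have hveq : v ^ 6 - (p + 3) * v ^ 4 + (2 * q + 3 - p) * v ^ 2 - (p - 1) ^ 2 = 0 := by
      have h := hv
      simp only [IsRoot, hf, eval_add, eval_sub, eval_mul, eval_pow, eval_X, eval_C] at h
      exact h
    have hv0 : v ≠ 0 := by
      rintro rfl
      apply hp
      have : (p - 1) ^ 2 = 0 := by linear_combination -hveq
      have h2 := pow_eq_zero_iff (n := 2) (by norm_num) |>.mp this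
      exact sub_eq_zero.mp h2
    refine ⟨((p - 1 - v ^ 2) / v, v), ?_⟩
    simp only [Prod.mk.injEq]
    constructor
    · field_simp
      ring
    · field_simp
      linear_combination -hveq
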